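/- In Max-Welter, there is no move from a 1-position to a 1-position, where a 1-position is a position (a_1,...,a_k) with k ≥ 2 satisfying either (a) the coins occupy {0,1,...,k} minus one square l+1 with l ≤ k-2, or (b) a_k = a_{k-1}+1 and a_{k-1}+k is odd. -/

import Mathlib

/-- A move in Max-Welter: the coin on the largest occupied square moves to an
empty square strictly to its left. -/
def MWMove (s t : Finset ℕ) : Prop :=
  ∃ (hs : s.Nonempty) (j : ℕ), j < s.max' hs ∧ j ∉ s ∧
    t = insert j (s.erase (s.max' hs))

theorem MWMove.sum_lt {s t : Finset ℕ} (h : MWMove s t) :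
    t.sum id < s.sum id := by
  obtain ⟨hs, j, hj, hjs, rfl⟩ := h
  have hm : s.max' hs ∈ s := s.max'_mem hs
  have hje : j ∉ s.erase (s.max' hs) := fun hc => hjs (Finset.mem_of_mem_erase hc)
  have h2 : (s.erase (s.max' hs)).sum id + s.max' hs = s.sum id :=
    Finset.sum_erase_add s id hm
  rw [Finset.sum_insert hje]
  simp only [id] at *
  omega

/-- Normal-play Sprague-Grundy value of a Max-Welter position. -/
noncomputable def grundy (s : Finset ℕ) : ℕ :=
  sInf {n : ℕ | ∀ t, ∀ _h : MWMove s t, grundy t ≠ n}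
termination_by s.sum id
decreasing_by exact _h.sum_lt

open Classical in
/-- Misère Sprague-Grundy value: terminal positions get value 1. -/
noncomputable def mgrundy (s : Finset ℕ) : ℕ :=
  if ∀ t, ¬ MWMove s t then 1
  else sInf {n : ℕ | ∀ t, ∀ _h : MWMove s t, mgrundy t ≠ n}
termination_by s.sum id
decreasing_by exact _h.sum_lt

/-- Normal play: `s` is a P-position iff every move leads to a non-P-position. -/
def MWPPos (s : Finset ℕ) : Prop :=
  ∀ t, ∀ _h : MWMove s t, ¬ MWPPos t
termination_by s.sum id
decreasing_by exact _h.sum_lt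

/-- Misère play: the player to move wins iff there is no move (the opponent made
the last move and loses), or some move leads to a position losing for the opponent. -/
def MWMisereWin (s : Finset ℕ) : Prop :=
  (∀ t, ¬ MWMove s t) ∨ ∃ t, ∃ _h : MWMove s t, ¬ MWMisereWin t
termination_by s.sum id
decreasing_by exact _h.sum_lt


/-!
A move from `{0, …, k} \ {i}` with `0 < i < k` must fill the hole, giving `{0, …, k - 1}`,
whose top two squares `k - 2, k - 1` have `(k - 2) + k` even. A move from a position whose
top two squares are `m, m + 1` lands strictly below `m`, so the new top square is `m`: this
is `k` only if `m + k` is even, and the new second square would be `m - 1`, of the wrong parity.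
-/

open Finset

/-- The 1-positions with `k` coins; clause (a) writes the paper's empty square `l + 1` as `i`. -/
def MWOnePos (k : ℕ) (s : Finset ℕ) : Prop :=
  (∃ i, 0 < i ∧ i < k ∧ s = (range (k + 1)).erase i) ∨
    ∃ m, m ∈ s ∧ IsGreatest (s : Set ℕ) (m + 1) ∧ Odd (m + k)

lemma isGreatest_image_univ_of_monotone {k : ℕ} (hk : 0 < k) {a : Fin k → ℕ}
    (ha : Monotone a) : IsGreatest (image a univ : Set ℕ) (a ⟨k - 1, by omega⟩) := by
  refine ⟨mem_image_of_mem a (mem_univ _), ?_⟩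
  intro x hx
  obtain ⟨i, -, rfl⟩ := mem_image.mp hx
  exact ha (Fin.le_def.mpr (by simp only; omega))

lemma isGreatest_range_succ_erase {n i : ℕ} (hi : i < n) :
    IsGreatest ((range (n + 1)).erase i : Set ℕ) n := by
  simp only [IsGreatest, mem_upperBounds, coe_erase, coe_range, Set.mem_sdiff, Set.mem_Iio,
    Set.mem_singleton_iff]
  exact ⟨by omega, fun x hx => by omega⟩

lemma MWMove.exists_eq_insert_erase {s t : Finset ℕ} {M : ℕ} (h : MWMove s t)
    (hM : IsGreatest (s : Set ℕ) M) : ∃ j < M, j ∉ s ∧ t = insert j (s.erase M) := by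
  obtain ⟨hs, j, hj, hjs, rfl⟩ := h
  obtain rfl := hM.unique (isGreatest_max' s hs)
  exact ⟨j, hj, hjs, rfl⟩

lemma MWMove.eq_range_of_eq_range_succ_erase {s t : Finset ℕ} {n i : ℕ} (h : MWMove s t)
    (hi : i < n) (hs : s = (range (n + 1)).erase i) : t = range n := by
  subst hs
  obtain ⟨j, hj, hjs, rfl⟩ := h.exists_eq_insert_erase (isGreatest_range_succ_erase hi)
  have hji : j = i := by
    simp only [mem_erase, mem_range, not_and] at hjs
    by_contra hne
    exact hjs hne (by omega)
  subst hji
  ext x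
  simp only [mem_insert, mem_erase, mem_range]
  omega

lemma MWMove.isGreatest_of_isGreatest_succ {s t : Finset ℕ} {m : ℕ} (h : MWMove s t)
    (hm : m ∈ s) (hM : IsGreatest (s : Set ℕ) (m + 1)) : IsGreatest (t : Set ℕ) m := by
  obtain ⟨j, hj, hjs, rfl⟩ := h.exists_eq_insert_erase hM
  have hjm : j ≠ m := by rintro rfl; exact hjs hm
  refine ⟨by simp [hm], fun x hx => ?_⟩
  simp only [coe_insert, coe_erase, Set.mem_insert_iff, Set.mem_sdiff,
    Set.mem_singleton_iff] at hx
  rcases hx with rfl | ⟨hxs, hxM⟩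
  · omega
  · have := hM.2 hxs
    omega

theorem MWMove.not_mwOnePos {k : ℕ} {s t : Finset ℕ} (h : MWMove s t) (hs : MWOnePos k s) :
    ¬ MWOnePos k t := by
  rintro (⟨i', -, hi'k, rfl⟩ | ⟨m', -, hM't, hodd'⟩)
  · rcases hs with ⟨i, -, hik, hs⟩ | ⟨m, hms, hMs, hodd⟩
    · have hk : k ∈ range k := by
        rw [← h.eq_range_of_eq_range_succ_erase hik hs]
        simp only [mem_erase, mem_range]
        omega
      simp at hk
    · obtain rfl := (h.isGreatest_of_isGreatest_succ hms hMs).unique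
        (isGreatest_range_succ_erase hi'k)
      exact Nat.not_even_iff_odd.mpr hodd ⟨m, rfl⟩
  · rcases hs with ⟨i, -, hik, hs⟩ | ⟨m, hms, hMs, hodd⟩
    · rw [h.eq_range_of_eq_range_succ_erase hik hs] at hM't
      have hlt : m' + 1 < k := by simpa using hM't.1
      have hle : k - 1 ≤ m' + 1 := hM't.2 (by simp only [coe_range, Set.mem_Iio]; omega)
      obtain ⟨c, hc⟩ := hodd'
      omega
    · obtain rfl := (h.isGreatest_of_isGreatest_succ hms hMs).unique hM't
      obtain ⟨c, hc⟩ := hodd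
      obtain ⟨d, hd⟩ := hodd'
      omega

lemma mwOnePos_image {k : ℕ} (hk : 1 < k) {a : Fin k → ℕ} (ha : Monotone a)
    (h : (∃ l, l ≤ k - 2 ∧
        Finset.image a Finset.univ = (Finset.range (k + 1)).erase (l + 1)) ∨
      (a ⟨k - 1, by omega⟩ = a ⟨k - 2, by omega⟩ + 1 ∧
        Odd (a ⟨k - 2, by omega⟩ + k))) :
    MWOnePos k (image a univ) := by
  rcases h with ⟨l, hl, hs⟩ | ⟨htop, hodd⟩
  · exact Or.inl ⟨l + 1, by omega, by omega, hs⟩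
  · refine Or.inr ⟨_, mem_image_of_mem a (mem_univ _), ?_, hodd⟩
    rw [← htop]
    exact isGreatest_image_univ_of_monotone (by omega) ha

/-- there is no move from a 1-position to a 1-position. -/
theorem maxWelter_no_move_one_to_one (k : ℕ) (hk : 2 ≤ k) (a b : Fin k → ℕ)
    (ha : StrictMono a) (hb : StrictMono b)
    (h1 : (∃ l, l ≤ k - 2 ∧
        Finset.image a Finset.univ = (Finset.range (k + 1)).erase (l + 1)) ∨
      (a ⟨k - 1, by omega⟩ = a ⟨k - 2, by omega⟩ + 1 ∧
        Odd (a ⟨k - 2, by omega⟩ + k)))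
    (hmv : MWMove (Finset.image a Finset.univ) (Finset.image b Finset.univ)) :
    ¬ ((∃ l, l ≤ k - 2 ∧
        Finset.image b Finset.univ = (Finset.range (k + 1)).erase (l + 1)) ∨
      (b ⟨k - 1, by omega⟩ = b ⟨k - 2, by omega⟩ + 1 ∧
        Odd (b ⟨k - 2, by omega⟩ + k))) := fun h2 =>
  hmv.not_mwOnePos (mwOnePos_image hk ha.monotone h1) (mwOnePos_image hk hb.monotone h2)
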